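/- arXiv:1604.08703 — 4 statements merged into one kernel-verified Lean document; each statement's English description precedes it below -/
import Mathlib

section
/- Let (α_n) be the reflected coefficient sequence of a nullstable multistep method (so that the solutions of the associated homogeneous recurrence are bounded), and let (α^{(-1)}_n) be the inverse convolution sequence defined by ∑_{s=0}^{r} α_{r-s} α^{(-1)}_s = δ_{0r}. Then the sequence (α^{(-1)}_n) is bounded. -/
/-!
The reversed polynomial `x ^ m * ϱ (1 / x)` has the coefficients `α`, so `∑ αinv n * x ^ n` is its
inverse power series, namely `(a m)⁻¹ * ∏ 1 / (1 - z * x)` over the roots `z` of `ϱ`, counted with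
multiplicity. The factors with `‖z‖ < 1` have absolutely summable coefficients, and so does their
product. The roots with `‖z‖ = 1` are pairwise distinct, so by partial fractions the product of
their factors is a linear combination of the geometric series `∑ z ^ n * x ^ n`, which have
bounded coefficients. A bounded sequence convolved with an absolutely summable one is bounded.
-/

open Finset Polynomial
open scoped PowerSeries

namespace PowerSeries

theorem mk_mul_mk_eq_one {R : Type*} [CommSemiring R] {c d : ℕ → R}
    (h : ∀ r, ∑ s ∈ range (r + 1), c (r - s) * d s = if r = 0 then 1 else 0) :
    mk d * mk c = 1 := by
  ext r
  rw [coeff_mul, coeff_one, ← h r,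
    Nat.sum_antidiagonal_eq_sum_range_succ fun i j => coeff i (mk d) * coeff j (mk c)]
  simp only [coeff_mk, mul_comm]

variable {𝕜 : Type*} [NormedField 𝕜]

def boundedCoeffs : Submodule 𝕜 𝕜⟦X⟧ where
  carrier := {f | ∃ C, ∀ n, ‖coeff n f‖ ≤ C}
  zero_mem' := ⟨0, fun n => by simp⟩
  add_mem' := by
    rintro f g ⟨A, hA⟩ ⟨B, hB⟩
    refine ⟨A + B, fun n => ?_⟩
    rw [map_add]
    exact (norm_add_le _ _).trans (add_le_add (hA n) (hB n))
  smul_mem' := by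
    rintro c f ⟨A, hA⟩
    refine ⟨‖c‖ * A, fun n => ?_⟩
    rw [coeff_smul, smul_eq_mul, norm_mul]
    exact mul_le_mul_of_nonneg_left (hA n) (norm_nonneg c)

theorem summable_norm_coeff_one : Summable fun n => ‖coeff n (1 : 𝕜⟦X⟧)‖ :=
  summable_of_ne_finset_zero (s := {0}) fun n hn => by
    rw [coeff_one, if_neg (Finset.notMem_singleton.mp hn), norm_zero]

theorem summable_norm_coeff_mul {f g : 𝕜⟦X⟧} (hf : Summable fun n => ‖coeff n f‖)
    (hg : Summable fun n => ‖coeff n g‖) : Summable fun n => ‖coeff n (f * g)‖ := by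
  simpa only [coeff_mul] using summable_norm_sum_mul_antidiagonal_of_summable_norm hf hg

theorem mul_mem_boundedCoeffs {f g : 𝕜⟦X⟧} (hf : f ∈ boundedCoeffs)
    (hg : Summable fun n => ‖coeff n g‖) : f * g ∈ boundedCoeffs := by
  obtain ⟨C, hC⟩ := hf
  refine ⟨C * ∑' n, ‖coeff n g‖, fun n => ?_⟩
  have hC0 : 0 ≤ C := (norm_nonneg _).trans (hC 0)
  calc ‖coeff n (f * g)‖
      ≤ ∑ ij ∈ antidiagonal n, ‖coeff ij.1 f‖ * ‖coeff ij.2 g‖ := by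
        rw [coeff_mul]
        exact (norm_sum_le _ _).trans (sum_le_sum fun _ _ => (norm_mul _ _).le)
    _ ≤ ∑ ij ∈ antidiagonal n, C * ‖coeff ij.2 g‖ :=
        sum_le_sum fun _ _ => mul_le_mul_of_nonneg_right (hC _) (norm_nonneg _)
    _ = C * ∑ j ∈ range (n + 1), ‖coeff j g‖ := by
        rw [← mul_sum, ← Nat.sum_antidiagonal_swap]
        exact congrArg (C * ·) (Nat.sum_antidiagonal_eq_sum_range_succ_mk _ n)
    _ ≤ C * ∑' n, ‖coeff n g‖ :=
        mul_le_mul_of_nonneg_left (hg.sum_le_tsum _ fun _ _ => norm_nonneg _) hC0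

def geom (z : 𝕜) : 𝕜⟦X⟧ := mk (z ^ ·)

@[simp]
theorem coeff_geom (z : 𝕜) (n : ℕ) : coeff n (geom z) = z ^ n := coeff_mk _ _

theorem one_sub_C_mul_X_mul_geom (z : 𝕜) : (1 - C z * X) * geom z = 1 := by
  have : geom z = rescale z (mk 1) := by ext n; simp [coeff_rescale]
  rw [this, ← rescale_X, ← map_one (rescale z), ← map_sub, ← map_mul, mul_comm,
    mk_one_mul_one_sub_eq_one, map_one]

theorem geom_mem_boundedCoeffs {z : 𝕜} (hz : ‖z‖ ≤ 1) : geom z ∈ boundedCoeffs :=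
  ⟨1, fun n => by simpa using pow_le_one₀ (norm_nonneg z) hz⟩

theorem summable_norm_coeff_geom {z : 𝕜} (hz : ‖z‖ < 1) :
    Summable fun n => ‖coeff n (geom z)‖ := by
  simpa using summable_geometric_of_lt_one (norm_nonneg z) hz

theorem geom_mul_geom {u v : 𝕜} (huv : u ≠ v) :
    geom u * geom v = (u - v)⁻¹ • (u • geom u - v • geom v) := by
  have hne : ∀ z : 𝕜, (1 - C z * X : 𝕜⟦X⟧) ≠ 0 := fun z h => by
    simpa [h] using one_sub_C_mul_X_mul_geom z
  refine mul_left_cancel₀ (mul_ne_zero (hne u) (hne v)) ?_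
  have hsub : u - v ≠ 0 := sub_ne_zero.mpr huv
  calc (1 - C u * X) * (1 - C v * X) * (geom u * geom v)
      = ((1 - C u * X) * geom u) * ((1 - C v * X) * geom v) := by ring
    _ = 1 := by rw [one_sub_C_mul_X_mul_geom, one_sub_C_mul_X_mul_geom, one_mul]
    _ = C (u - v)⁻¹ * (C u * (1 - C v * X) * ((1 - C u * X) * geom u)
          - C v * (1 - C u * X) * ((1 - C v * X) * geom v)) := by
        have : C u * (1 - C v * X) - C v * (1 - C u * X) = C (u - v) := by
          rw [map_sub]; ring
        rw [one_sub_C_mul_X_mul_geom, one_sub_C_mul_X_mul_geom, mul_one, mul_one, this,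
          ← map_mul, inv_mul_cancel₀ hsub, map_one]
    _ = _ := by simp only [smul_eq_C_mul]; ring

theorem prod_geom_mem_span {t : Finset 𝕜} (ht : t.Nonempty) :
    ∏ u ∈ t, geom u ∈ Submodule.span 𝕜 (geom '' t) := by
  induction ht using Finset.Nonempty.cons_induction with
  | singleton a =>
    rw [prod_singleton, coe_singleton, Set.image_singleton]
    exact Submodule.mem_span_singleton_self _
  | cons w t hw _ ih =>
    rw [prod_cons]
    suffices (Submodule.span 𝕜 (geom '' t)).map (LinearMap.mulLeft 𝕜 (geom w)) ≤
        Submodule.span 𝕜 (geom '' (cons w t hw)) from this (Submodule.mem_map_of_mem ih)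
    rw [Submodule.map_span, Submodule.span_le]
    rintro _ ⟨_, ⟨u, hu, rfl⟩, rfl⟩
    have hmem : ∀ z ∈ cons w t hw, geom z ∈ Submodule.span 𝕜 (geom '' (cons w t hw)) :=
      fun z hz => Submodule.subset_span ⟨z, hz, rfl⟩
    rw [LinearMap.mulLeft_apply, geom_mul_geom (ne_of_mem_of_not_mem hu hw).symm]
    exact Submodule.smul_mem _ _ (Submodule.sub_mem _
      (Submodule.smul_mem _ _ (hmem w (mem_cons_self w t)))
      (Submodule.smul_mem _ _ (hmem u (mem_cons_of_mem hu))))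

theorem prod_geom_mem_boundedCoeffs (t : Finset 𝕜) (ht : ∀ u ∈ t, ‖u‖ ≤ 1) :
    ∏ u ∈ t, geom u ∈ boundedCoeffs := by
  rcases t.eq_empty_or_nonempty with rfl | hne
  · refine ⟨1, fun n => ?_⟩
    rw [prod_empty, coeff_one]
    split_ifs <;> simp
  · refine Submodule.span_le.mpr ?_ (prod_geom_mem_span hne)
    rintro _ ⟨u, hu, rfl⟩
    exact geom_mem_boundedCoeffs (ht u hu)

theorem multiset_prod_geom_mem_boundedCoeffs {s : Multiset 𝕜} (hs : ∀ z ∈ s, ‖z‖ ≤ 1)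
    (hnodup : (s.filter (‖·‖ = 1)).Nodup) : (s.map geom).prod ∈ boundedCoeffs := by
  rw [← Multiset.filter_add_not (‖·‖ = 1) s, Multiset.map_add, Multiset.prod_add]
  refine mul_mem_boundedCoeffs ?_ ?_
  · exact prod_geom_mem_boundedCoeffs (⟨_, hnodup⟩ : Finset 𝕜)
      fun u hu => hs u (Multiset.mem_of_mem_filter hu)
  · refine Multiset.prod_induction (fun f => Summable fun n => ‖coeff n f‖) _
      (fun _ _ => summable_norm_coeff_mul)
      summable_norm_coeff_one ?_
    simp only [Multiset.mem_map, Multiset.mem_filter]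
    rintro _ ⟨z, ⟨hz, hz1⟩, rfl⟩
    exact summable_norm_coeff_geom ((hs z hz).lt_of_ne hz1)

end PowerSeries

namespace Polynomial

section SumRange

variable {R : Type*} [CommRing R] (c : ℕ → R) (m : ℕ)

theorem coeff_sum_range_C_mul_X_pow (k : ℕ) :
    (∑ j ∈ range (m + 1), C (c j) * X ^ j).coeff k = if k ≤ m then c k else 0 := by
  simp

theorem eval_sum_range_C_mul_X_pow (z : R) :
    (∑ j ∈ range (m + 1), C (c j) * X ^ j).eval z = ∑ j ∈ range (m + 1), c j * z ^ j := by
  simp [eval_finsetSum]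

theorem eval_derivative_sum_range_C_mul_X_pow (z : R) :
    (∑ j ∈ range (m + 1), C (c j) * X ^ j).derivative.eval z =
      ∑ j ∈ range (m + 1), (j : R) * c j * z ^ (j - 1) := by
  simp only [derivative_sum, derivative_C_mul_X_pow, eval_finsetSum, eval_C_mul, eval_X_pow]
  exact sum_congr rfl fun j _ => by ring

variable {c m}

theorem natDegree_sum_range_C_mul_X_pow (hc : c m ≠ 0) :
    (∑ j ∈ range (m + 1), C (c j) * X ^ j).natDegree = m := by
  refine natDegree_eq_of_le_of_coeff_ne_zero ?_ (by simpa [coeff_sum_range_C_mul_X_pow])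
  refine natDegree_le_iff_coeff_eq_zero.mpr fun k hk => ?_
  simp [not_le.mpr hk]

theorem coeff_reverse_sum_range_C_mul_X_pow (hc : c m ≠ 0) (k : ℕ) :
    (∑ j ∈ range (m + 1), C (c j) * X ^ j).reverse.coeff k =
      if k ≤ m then c (m - k) else 0 := by
  rw [coeff_reverse, natDegree_sum_range_C_mul_X_pow hc, coeff_sum_range_C_mul_X_pow]
  by_cases hk : k ≤ m
  · rw [revAt_le hk, if_pos (Nat.sub_le m k), if_pos hk]
  · rw [revAt_eq_self_of_lt (not_le.mp hk), if_neg hk, if_neg hk]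

end SumRange

section Reverse

variable {R : Type*}

theorem reverse_one [Semiring R] : (1 : R[X]).reverse = 1 := by
  simpa using reverse_C (1 : R)

theorem reverse_X_sub_C [Ring R] [Nontrivial R] (z : R) : (X - C z).reverse = 1 - C z * X := by
  have hX : (X : R[X]).reverse = 1 := by simpa [reverse_one] using reverse_mul_X (1 : R[X])
  rw [sub_eq_add_neg, ← C_neg, reverse_add_C, hX, natDegree_X, pow_one, C_neg, neg_mul,
    ← sub_eq_add_neg]

theorem reverse_multiset_prod_X_sub_C [CommRing R] [IsDomain R] (s : Multiset R) :
    (s.map (X - C ·)).prod.reverse = (s.map fun z => 1 - C z * X).prod := by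
  induction s using Multiset.induction with
  | empty => simp [reverse_one]
  | cons z s ih =>
    simp only [Multiset.map_cons, Multiset.prod_cons, reverse_mul_of_domain, ih, reverse_X_sub_C]

theorem Splits.reverse_eq_C_mul_prod_roots [CommRing R] [IsDomain R] {p : R[X]}
    (hsplit : p.Splits) :
    p.reverse = C p.leadingCoeff * (p.roots.map fun z => 1 - C z * X).prod := by
  conv_lhs => rw [hsplit.eq_prod_roots]
  rw [reverse_mul_of_domain, reverse_C, reverse_multiset_prod_X_sub_C]

theorem coe_multiset_prod_one_sub_C_mul_X [CommRing R] (s : Multiset R) :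
    (↑(s.map fun z => (1 - C z * X : R[X])).prod : R⟦X⟧) =
      (s.map fun z => (1 - PowerSeries.C z * PowerSeries.X : R⟦X⟧)).prod := by
  rw [← coeToPowerSeries.ringHom_apply, map_multiset_prod, Multiset.map_map]
  congr 1
  refine Multiset.map_congr rfl fun z _ => ?_
  simp

end Reverse

variable {𝕜 : Type*} [NormedField 𝕜]

def IsSimpleVonNeumann (p : 𝕜[X]) : Prop :=
  ∀ z, p.IsRoot z → ‖z‖ ≤ 1 ∧ (‖z‖ = 1 → ¬ p.derivative.IsRoot z)

theorem IsSimpleVonNeumann.nodup_filter_roots {p : 𝕜[X]} (hp : p ≠ 0)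
    (h : p.IsSimpleVonNeumann) : (p.roots.filter (‖·‖ = 1)).Nodup := by
  classical
  refine Multiset.nodup_iff_count_le_one.mpr fun z => ?_
  rw [Multiset.count_filter]
  split_ifs with hz
  · rw [count_roots]
    by_contra! hlt
    obtain ⟨hroot, hderiv⟩ := (one_lt_rootMultiplicity_iff_isRoot hp).mp hlt
    exact (h z hroot).2 hz hderiv
  · exact zero_le_one

theorem IsSimpleVonNeumann.exists_mul_reverse_eq_one [IsAlgClosed 𝕜] {p : 𝕜[X]} (hp : p ≠ 0)
    (h : p.IsSimpleVonNeumann) :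
    ∃ g ∈ PowerSeries.boundedCoeffs, (p.reverse : 𝕜⟦X⟧) * g = 1 := by
  refine ⟨PowerSeries.C p.leadingCoeff⁻¹ * (p.roots.map PowerSeries.geom).prod, ?_, ?_⟩
  · rw [← PowerSeries.smul_eq_C_mul]
    exact Submodule.smul_mem _ _ (PowerSeries.multiset_prod_geom_mem_boundedCoeffs
      (fun z hz => (h z (isRoot_of_mem_roots hz)).1) (h.nodup_filter_roots hp))
  · rw [(IsAlgClosed.splits p).reverse_eq_C_mul_prod_roots, coe_mul, coe_C,
      coe_multiset_prod_one_sub_C_mul_X, mul_mul_mul_comm, ← map_mul,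
      mul_inv_cancel₀ (leadingCoeff_ne_zero.mpr hp), map_one, one_mul, ← Multiset.prod_map_mul]
    simp [PowerSeries.one_sub_C_mul_X_mul_geom]

end Polynomial

/-- For a nullstable multistep method, the convolution inverse of the reflected
coefficient sequence is bounded. -/
theorem convolution_inverse_bounded_of_nullstable
    (m : ℕ) (a : ℕ → ℝ) (ham : a m ≠ 0)
    (hroots : ∀ z : ℂ, (∑ j ∈ Finset.range (m + 1), (a j : ℂ) * z ^ j) = 0 →
      ‖z‖ ≤ 1)
    (hsimple : ∀ z : ℂ, (∑ j ∈ Finset.range (m + 1), (a j : ℂ) * z ^ j) = 0 →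
      ‖z‖ = 1 →
      (∑ j ∈ Finset.range (m + 1), (j : ℂ) * (a j : ℂ) * z ^ (j - 1)) ≠ 0)
    (α αinv : ℕ → ℝ)
    (hα : ∀ j : ℕ, α j = if j ≤ m then a (m - j) else 0)
    (hconv : ∀ r : ℕ, ∑ s ∈ Finset.range (r + 1), α (r - s) * αinv s =
      if r = 0 then 1 else 0) :
    ∃ K : ℝ, ∀ n : ℕ, |αinv n| ≤ K := by
  set ρ : ℂ[X] := ∑ j ∈ range (m + 1), C (a j : ℂ) * X ^ j with hρ_def
  have ham' : (a m : ℂ) ≠ 0 := Complex.ofReal_ne_zero.mpr ham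
  have hρm : ρ.coeff m = a m := by rw [hρ_def, coeff_sum_range_C_mul_X_pow, if_pos le_rfl]
  have hρ : ρ ≠ 0 := fun h => ham' (by rw [← hρm, h, coeff_zero])
  have hvN : ρ.IsSimpleVonNeumann := fun z hz => by
    rw [IsRoot, hρ_def, eval_sum_range_C_mul_X_pow] at hz
    refine ⟨hroots z hz, fun hz1 hd => hsimple z hz hz1 ?_⟩
    rwa [IsRoot, hρ_def, eval_derivative_sum_range_C_mul_X_pow] at hd
  obtain ⟨g, ⟨K, hK⟩, hg⟩ := hvN.exists_mul_reverse_eq_one hρ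
  have hrev : (ρ.reverse : ℂ⟦X⟧) = PowerSeries.mk fun j => (α j : ℂ) := by
    ext k
    rw [Polynomial.coeff_coe, hρ_def, coeff_reverse_sum_range_C_mul_X_pow ham',
      PowerSeries.coeff_mk, hα]
    split_ifs <;> simp
  have hinv : PowerSeries.mk (fun n => (αinv n : ℂ)) * ρ.reverse = 1 := by
    rw [hrev]
    exact PowerSeries.mk_mul_mk_eq_one fun r => by
      simpa [apply_ite Complex.ofReal] using congrArg Complex.ofReal (hconv r)
  refine ⟨K, fun n => ?_⟩
  have hKn := hK n
  rwa [← left_inv_eq_right_inv hinv hg, PowerSeries.coeff_mk, Complex.norm_real,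
    Real.norm_eq_abs] at hKn
end

section
/- Discrete Gronwall-type stability: let B = (b_{nj}) be a lower triangular real (N+1)×(N+1) matrix with |b_{nn}| ≥ 1/(1+c) for all n (where c ≥ 0) and |b_{nj}| ≤ K h for all 0 ≤ j < n ≤ N, where h = (b-a)/N and K ≥ 0. Then B is invertible and ‖B^{-1}‖_∞ ≤ (1+c) · exp((1+c) K (b-a)). -/
/-- The matrix norm induced by the maximum norm: the maximal absolute row sum. -/
noncomputable def rowSumNorm {n : ℕ} (A : Matrix (Fin n) (Fin n) ℝ) : ℝ :=
  ⨆ i : Fin n, ∑ j : Fin n, |A i j|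

/-- Discrete Gronwall-type stability bound for lower triangular matrices with
diagonal bounded away from zero and small off-diagonal entries. -/
theorem lower_triangular_gronwall_bound
    (N : ℕ) (hN : 0 < N) (a b c K : ℝ) (hab : a < b) (hc : 0 ≤ c) (hK : 0 ≤ K)
    (h : ℝ) (hh : h = (b - a) / N)
    (B : Matrix (Fin (N + 1)) (Fin (N + 1)) ℝ)
    (htri : ∀ i j : Fin (N + 1), (i : ℕ) < (j : ℕ) → B i j = 0)
    (hdiag : ∀ i : Fin (N + 1), 1 / (1 + c) ≤ |B i i|)
    (hoff : ∀ i j : Fin (N + 1), (j : ℕ) < (i : ℕ) → |B i j| ≤ K * h) :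
    IsUnit B ∧ rowSumNorm B⁻¹ ≤ (1 + c) * Real.exp ((1 + c) * K * (b - a)) := by
  have hc1 : (0:ℝ) < 1 + c := by linarith
  have hh0 : 0 ≤ h := by
    rw [hh]
    apply div_nonneg (by linarith)
    exact_mod_cast hN.le
  have hNh : (N : ℝ) * h = b - a := by
    rw [hh]
    field_simp
  have hdne : ∀ i, B i i ≠ 0 := by
    intro i hz
    have h1 := hdiag i
    rw [hz, abs_zero] at h1
    have h2 : (0:ℝ) < 1 / (1 + c) := by positivity
    linarith
  have hdetval : B.det = ∏ i, B i i := by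
    apply Matrix.det_of_lowerTriangular
    intro i j hij
    exact htri i j hij
  have hdet : IsUnit B.det := by
    rw [hdetval]
    exact isUnit_iff_ne_zero.mpr (Finset.prod_ne_zero_iff.mpr fun i _ => hdne i)
  have hunit : IsUnit B := (Matrix.isUnit_iff_isUnit_det B).mpr hdet
  refine ⟨hunit, ?_⟩
  set X := B⁻¹ with hX
  have hmul : B * X = 1 := Matrix.mul_nonsing_inv B hdet
  set S : Fin (N+1) → ℝ := fun n => ∑ j, |X n j| with hS
  set P : ℝ := 1 + (1 + c) * K * h with hP
  have hP1 : 1 ≤ P := by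
    have : 0 ≤ (1 + c) * K * h := by positivity
    linarith
  have hP0 : 0 ≤ P := by linarith
  -- recursion: S n ≤ (1+c) * (1 + K*h * ∑_{m < n} S m)
  have hrec : ∀ n : Fin (N+1),
      S n ≤ (1 + c) * (1 + K * h *
        ∑ m ∈ Finset.univ.filter (fun m : Fin (N+1) => (m:ℕ) < (n:ℕ)), S m) := by
    intro n
    set F := Finset.univ.filter (fun m : Fin (N+1) => (m:ℕ) < (n:ℕ)) with hF
    have hentry : ∀ j, |X n j| ≤
        (1 + c) * ((if n = j then (1:ℝ) else 0) + ∑ m ∈ F, K * h * |X m j|) := by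
      intro j
      have hsum : ∑ m, B n m * X m j = (1 : Matrix (Fin (N+1)) (Fin (N+1)) ℝ) n j := by
        rw [← Matrix.mul_apply, hmul]
      have hsplit : ∑ m, B n m * X m j = B n n * X n j + ∑ m ∈ F, B n m * X m j := by
        rw [← Finset.add_sum_erase Finset.univ _ (Finset.mem_univ n)]
        congr 1
        symm
        apply Finset.sum_subset
        · intro m hm
          simp only [hF, Finset.mem_filter, Finset.mem_univ, true_and] at hm
          exact Finset.mem_erase.mpr ⟨Fin.ne_of_lt hm, Finset.mem_univ m⟩
        · intro m hm hnm
          simp only [Finset.mem_erase, Finset.mem_univ, and_true] at hm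
          simp only [hF, Finset.mem_filter, Finset.mem_univ, true_and] at hnm
          have : (n:ℕ) < (m:ℕ) := by
            rcases lt_or_ge (n:ℕ) (m:ℕ) with h' | h'
            · exact h'
            · exfalso
              rcases lt_or_eq_of_le h' with h'' | h''
              · exact hnm h''
              · exact hm (Fin.ext h'')
          rw [htri n m this, zero_mul]
      have heq : B n n * X n j =
          (1 : Matrix (Fin (N+1)) (Fin (N+1)) ℝ) n j - ∑ m ∈ F, B n m * X m j := by
        rw [← hsum, hsplit]; ring
      have habs : |B n n * X n j| ≤
          (if n = j then (1:ℝ) else 0) + ∑ m ∈ F, K * h * |X m j| := by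
        rw [heq]
        refine le_trans (abs_sub _ _) ?_
        gcongr
        · rw [Matrix.one_apply]
          split <;> simp
        · refine le_trans (Finset.abs_sum_le_sum_abs _ _) ?_
          apply Finset.sum_le_sum
          intro m hm
          simp only [hF, Finset.mem_filter, Finset.mem_univ, true_and] at hm
          rw [abs_mul]
          exact mul_le_mul_of_nonneg_right (hoff n m hm) (abs_nonneg _)
      have hX1 : |X n j| ≤ (1 + c) * |B n n * X n j| := by
        rw [abs_mul]
        have := mul_le_mul_of_nonneg_right (hdiag n) (abs_nonneg (X n j))
        calc |X n j| = (1 + c) * (1 / (1 + c) * |X n j|) := by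
              field_simp
          _ ≤ (1 + c) * (|B n n| * |X n j|) := by
              exact mul_le_mul_of_nonneg_left this (le_of_lt hc1)
      exact le_trans hX1 (mul_le_mul_of_nonneg_left habs (le_of_lt hc1))
    calc S n ≤ ∑ j, (1 + c) * ((if n = j then (1:ℝ) else 0) + ∑ m ∈ F, K * h * |X m j|) :=
          Finset.sum_le_sum fun j _ => hentry j
      _ = (1 + c) * (1 + K * h * ∑ m ∈ F, S m) := by
          rw [← Finset.mul_sum, Finset.sum_add_distrib, Finset.sum_ite_eq Finset.univ n (fun _ => (1:ℝ))]
          simp only [Finset.mem_univ, if_true]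
          congr 1
          congr 1
          rw [Finset.sum_comm, Finset.mul_sum]
          apply Finset.sum_congr rfl
          intro m _
          rw [hS, Finset.mul_sum]
  -- main bound by strong induction
  have main : ∀ k : ℕ, ∀ n : Fin (N+1), (n:ℕ) = k → S n ≤ (1 + c) * P ^ (n:ℕ) := by
    intro k
    induction k using Nat.strong_induction_on with
    | _ k ih =>
      intro n hn
      have hFsum : ∑ m ∈ Finset.univ.filter (fun m : Fin (N+1) => (m:ℕ) < (n:ℕ)), S m
          ≤ (1 + c) * ∑ i ∈ Finset.range k, P ^ i := by
        have h1 : ∑ m ∈ Finset.univ.filter (fun m : Fin (N+1) => (m:ℕ) < (n:ℕ)), S m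
            ≤ ∑ m ∈ Finset.univ.filter (fun m : Fin (N+1) => (m:ℕ) < (n:ℕ)), (1 + c) * P ^ (m:ℕ) := by
          apply Finset.sum_le_sum
          intro m hm
          simp only [Finset.mem_filter, Finset.mem_univ, true_and] at hm
          exact ih (m:ℕ) (hn ▸ hm) m rfl
        refine le_trans h1 (le_of_eq ?_)
        rw [Finset.mul_sum]
        simp only [hn]
        have hk : k ≤ N := by omega
        rw [Finset.sum_filter]
        rw [Fin.sum_univ_eq_sum_range (fun i => if i < k then (1 + c) * P ^ i else 0)]
        rw [← Finset.sum_filter]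
        congr 1
        ext i
        simp only [Finset.mem_filter, Finset.mem_range]
        omega
      have hgeom : (1 + c) * K * h * ∑ i ∈ Finset.range k, P ^ i = P ^ k - 1 := by
        have := geom_sum_mul P k
        have hP' : P - 1 = (1 + c) * K * h := by rw [hP]; ring
        calc (1 + c) * K * h * ∑ i ∈ Finset.range k, P ^ i
            = (∑ i ∈ Finset.range k, P ^ i) * (P - 1) := by rw [hP']; ring
          _ = P ^ k - 1 := geom_sum_mul P k
      have hKh : 0 ≤ K * h := by positivity
      have step : K * h * ∑ m ∈ Finset.univ.filter (fun m : Fin (N+1) => (m:ℕ) < (n:ℕ)), S m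
          ≤ P ^ k - 1 := by
        calc K * h * ∑ m ∈ Finset.univ.filter (fun m : Fin (N+1) => (m:ℕ) < (n:ℕ)), S m
            ≤ K * h * ((1 + c) * ∑ i ∈ Finset.range k, P ^ i) := by
              apply mul_le_mul_of_nonneg_left hFsum hKh
          _ = (1 + c) * K * h * ∑ i ∈ Finset.range k, P ^ i := by ring
          _ = P ^ k - 1 := hgeom
      calc S n ≤ (1 + c) * (1 + K * h *
            ∑ m ∈ Finset.univ.filter (fun m : Fin (N+1) => (m:ℕ) < (n:ℕ)), S m) := hrec n
        _ ≤ (1 + c) * (1 + (P ^ k - 1)) := by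
            apply mul_le_mul_of_nonneg_left _ (le_of_lt hc1)
            linarith
        _ = (1 + c) * P ^ (n:ℕ) := by rw [hn]; ring
  -- conclude
  have hfinal : ∀ n : Fin (N+1), S n ≤ (1 + c) * Real.exp ((1 + c) * K * (b - a)) := by
    intro n
    refine le_trans (main (n:ℕ) n rfl) ?_
    apply mul_le_mul_of_nonneg_left _ (le_of_lt hc1)
    have h1 : P ≤ Real.exp ((1 + c) * K * h) := by
      rw [hP]
      have := Real.add_one_le_exp ((1 + c) * K * h)
      linarith
    calc P ^ (n:ℕ) ≤ Real.exp ((1 + c) * K * h) ^ (n:ℕ) := by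
          exact pow_le_pow_left₀ hP0 h1 _
      _ = Real.exp ((n:ℕ) * ((1 + c) * K * h)) := by
          rw [← Real.exp_nat_mul]
      _ ≤ Real.exp ((1 + c) * K * (b - a)) := by
          apply Real.exp_le_exp.mpr
          have hn : ((n:ℕ) : ℝ) ≤ (N : ℝ) := by
            exact_mod_cast Nat.lt_succ_iff.mp n.isLt
          have : ((n:ℕ) : ℝ) * h ≤ (N : ℝ) * h := mul_le_mul_of_nonneg_right hn hh0
          rw [hNh] at this
          calc ((n:ℕ) : ℝ) * ((1 + c) * K * h) = (1 + c) * K * (((n:ℕ) : ℝ) * h) := by ring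
            _ ≤ (1 + c) * K * (b - a) := by
                apply mul_le_mul_of_nonneg_left this (by positivity)
  exact ciSup_le hfinal
end

section
/- Balancing principle set inclusion: let Σ be a finite set of positive step sizes, δ > 0, and suppose for each h ∈ Σ an approximation error bound err(h) ≤ C₁ h^p + C₂ δ/h holds, where err(h) := max_{y ∈ I_h} |u^δ(y;h) - u(y)|. Define M^δ = {h ∈ Σ : h^{p+1} ≤ C₃ δ} with C₃ > 0 satisfying 2(C₁C₃ + C₂) ≤ β. Then every h* ∈ M^δ belongs to H^δ = {h* ∈ Σ : for all h, h' ∈ Σ with h < h' ≤ h*, max_{y ∈ I_{h'}} |u^δ(y;h') - u^δ(y;h)| ≤ β δ/h}. -/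
/-- Balancing principle set inclusion `M^δ ⊆ H^δ`: every step size `h* ∈ Σ`
with `h*^{p+1} ≤ C₃δ` satisfies the balancing test. -/
theorem balancing_set_inclusion
    (Sig : Finset ℝ) (hSigpos : ∀ h ∈ Sig, 0 < h)
    (δ C₁ C₂ C₃ β : ℝ) (hδ : 0 < δ) (hC₁ : 0 ≤ C₁) (hC₂ : 0 ≤ C₂) (hC₃ : 0 < C₃)
    (hβ : 2 * (C₁ * C₃ + C₂) ≤ β) (p : ℕ) (hp : 1 ≤ p)
    (I : ℝ → Set ℝ)
    (hnested : ∀ h ∈ Sig, ∀ h' ∈ Sig, h ≤ h' → I h' ⊆ I h)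
    (u : ℝ → ℝ) (ud : ℝ → ℝ → ℝ)
    (herr : ∀ h ∈ Sig, ∀ y ∈ I h, |ud h y - u y| ≤ C₁ * h ^ p + C₂ * δ / h) :
    ∀ hstar ∈ Sig, hstar ^ (p + 1) ≤ C₃ * δ →
      ∀ h ∈ Sig, ∀ h' ∈ Sig, h < h' → h' ≤ hstar →
        ∀ y ∈ I h', |ud h' y - ud h y| ≤ β * δ / h := by
  intro hstar hstarS hstarM h hS h' h'S hlt hle y hy
  have hpos : 0 < h := hSigpos h hS
  have h'pos : 0 < h' := hSigpos h' h'S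
  have hyh : y ∈ I h := hnested h hS h' h'S hlt.le hy
  have e1 := herr h' h'S y hy
  have e2 := herr h hS y hyh
  have tri : |ud h' y - ud h y| ≤ (C₁ * h' ^ p + C₂ * δ / h') + (C₁ * h ^ p + C₂ * δ / h) := by
    calc |ud h' y - ud h y| = |(ud h' y - u y) - (ud h y - u y)| := by ring_nf
      _ ≤ |ud h' y - u y| + |ud h y - u y| := abs_sub _ _
      _ ≤ _ := add_le_add e1 e2
  -- h^{p+1} ≤ h'^{p+1} ≤ hstar^{p+1} ≤ C₃ δ
  have hkey : ∀ a : ℝ, 0 < a → a ^ (p+1) ≤ C₃ * δ → a ^ p ≤ C₃ * δ / a := by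
    intro a ha hA
    rw [le_div_iff₀ ha]
    calc a ^ p * a = a ^ (p+1) := by ring
      _ ≤ C₃ * δ := hA
  have hh' : h' ^ (p+1) ≤ C₃ * δ :=
    le_trans (pow_le_pow_left₀ h'pos.le hle _) hstarM
  have hh : h ^ (p+1) ≤ C₃ * δ :=
    le_trans (pow_le_pow_left₀ hpos.le hlt.le _) hh'
  have b1 : h' ^ p ≤ C₃ * δ / h := le_trans (hkey h' h'pos hh')
    (div_le_div_of_nonneg_left (by positivity) hpos hlt.le)
  have b2 : h ^ p ≤ C₃ * δ / h := hkey h hpos hh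
  have b3 : C₂ * δ / h' ≤ C₂ * δ / h :=
    div_le_div_of_nonneg_left (by positivity) hpos hlt.le
  have : (C₁ * h' ^ p + C₂ * δ / h') + (C₁ * h ^ p + C₂ * δ / h)
      ≤ 2 * (C₁ * C₃ + C₂) * δ / h := by
    have : C₁ * h' ^ p + C₁ * h ^ p ≤ 2 * (C₁ * (C₃ * δ / h)) := by
      nlinarith [mul_le_mul_of_nonneg_left b1 hC₁, mul_le_mul_of_nonneg_left b2 hC₁]
    have hd : 2 * (C₁ * (C₃ * δ / h)) + (C₂ * δ / h + C₂ * δ / h)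
        = 2 * (C₁ * C₃ + C₂) * δ / h := by field_simp; ring
    linarith [b3]
  have hfin : 2 * (C₁ * C₃ + C₂) * δ / h ≤ β * δ / h := by
    gcongr
  linarith [tri]
end

section
/- Balancing principle error bound: under the hypotheses of the set inclusion M^δ ⊆ H^δ, letting h(δ) = max H^δ, for every h ∈ Σ with h ≤ h(δ) one has max_{y ∈ I_{h(δ)}} |u^δ(y; h(δ)) - u(y)| ≤ C₁ h^p + (β + C₂) δ/h. Consequently, if there is h⁺ ∈ Σ with h⁺ ≤ h(δ) and c₁ δ^{1/(p+1)} ≤ h⁺ ≤ c₂ δ^{1/(p+1)}, then the error at h(δ) is at most C δ^{p/(p+1)} with C depending only on C₁, C₂, β, c₁, c₂. -/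
/-- Balancing principle error bound: the approximation at the balanced step
size `hδ = max H^δ` is bounded via any smaller admissible step size, and is of
optimal order `δ^{p/(p+1)}` if a step size of order `δ^{1/(p+1)}` lies below `hδ`. -/
theorem balancing_error_bound
    (Sig : Finset ℝ) (hSigpos : ∀ h ∈ Sig, 0 < h)
    (δ C₁ C₂ β c₁ c₂ : ℝ) (hδpos : 0 < δ) (hC₁ : 0 ≤ C₁) (hC₂ : 0 ≤ C₂)
    (hβ : 0 ≤ β) (hc₁ : 0 < c₁) (hc₂ : 0 < c₂) (p : ℕ) (hp : 1 ≤ p)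
    (I : ℝ → Set ℝ)
    (hnested : ∀ h ∈ Sig, ∀ h' ∈ Sig, h ≤ h' → I h' ⊆ I h)
    (u : ℝ → ℝ) (ud : ℝ → ℝ → ℝ)
    (herr : ∀ h ∈ Sig, ∀ y ∈ I h, |ud h y - u y| ≤ C₁ * h ^ p + C₂ * δ / h)
    (hδ : ℝ) (hhδmem : hδ ∈ Sig)
    (hbal : ∀ h ∈ Sig, ∀ h' ∈ Sig, h < h' → h' ≤ hδ →
      ∀ y ∈ I h', |ud h' y - ud h y| ≤ β * δ / h) :
    (∀ h ∈ Sig, h ≤ hδ → ∀ y ∈ I hδ,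
      |ud hδ y - u y| ≤ C₁ * h ^ p + (β + C₂) * δ / h) ∧
    (∀ hplus ∈ Sig, hplus ≤ hδ →
      c₁ * δ ^ ((1 : ℝ) / (p + 1)) ≤ hplus → hplus ≤ c₂ * δ ^ ((1 : ℝ) / (p + 1)) →
      ∀ y ∈ I hδ,
        |ud hδ y - u y| ≤ (C₁ * c₂ ^ p + (β + C₂) / c₁) * δ ^ ((p : ℝ) / (p + 1))) := by

  have hpart1 : ∀ h ∈ Sig, h ≤ hδ → ∀ y ∈ I hδ,
      |ud hδ y - u y| ≤ C₁ * h ^ p + (β + C₂) * δ / h := by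
    intro h hmem hle y hy
    have hhpos : 0 < h := hSigpos h hmem
    rcases eq_or_lt_of_le hle with heq | hlt
    · subst heq
      have := herr h hmem y hy
      have hnn : 0 ≤ β * δ / h := by positivity
      calc |ud h y - u y| ≤ C₁ * h ^ p + C₂ * δ / h := this
        _ ≤ C₁ * h ^ p + (β + C₂) * δ / h := by
            have : C₂ * δ / h ≤ (β + C₂) * δ / h := by
              apply div_le_div_of_nonneg_right ?_ hhpos.le
              nlinarith
            linarith
    · have hyh : y ∈ I h := hnested h hmem hδ hhδmem hle hy
      have h1 := herr h hmem y hyh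
      have h2 := hbal h hmem hδ hhδmem hlt le_rfl y hy
      calc |ud hδ y - u y| ≤ |ud hδ y - ud h y| + |ud h y - u y| := by
            have := abs_sub_le (ud hδ y) (ud h y) (u y); linarith [abs_sub_abs_le_abs_sub (ud hδ y) (u y)]
        _ ≤ β * δ / h + (C₁ * h ^ p + C₂ * δ / h) := by linarith
        _ = C₁ * h ^ p + (β + C₂) * δ / h := by ring
  refine ⟨hpart1, ?_⟩
  intro hplus hmem hle hlb hub y hy
  have hppos : 0 < hplus := hSigpos hplus hmem
  set a : ℝ := (1 : ℝ) / (p + 1) with ha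
  set b : ℝ := (p : ℝ) / (p + 1) with hb
  have hp1 : (0:ℝ) < (p:ℝ) + 1 := by positivity
  have hab : b + a = 1 := by rw [ha, hb]; field_simp
  have hdpow : 0 < δ ^ a := Real.rpow_pos_of_pos hδpos a
  have hbpow : 0 < δ ^ b := Real.rpow_pos_of_pos hδpos b
  have key := hpart1 hplus hmem hle y hy
  have h1 : hplus ^ p ≤ c₂ ^ p * δ ^ b := by
    have : hplus ^ p ≤ (c₂ * δ ^ a) ^ p := pow_le_pow_left₀ hppos.le hub p
    calc hplus ^ p ≤ (c₂ * δ ^ a) ^ p := this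
      _ = c₂ ^ p * (δ ^ a) ^ (p:ℕ) := by rw [mul_pow]
      _ = c₂ ^ p * δ ^ (a * p) := by
          rw [← Real.rpow_natCast (δ ^ a) p, ← Real.rpow_mul hδpos.le]
      _ = c₂ ^ p * δ ^ b := by
          congr 1
          rw [ha, hb]; ring
  have h2 : δ / hplus ≤ δ ^ b / c₁ := by
    have hc : 0 < c₁ * δ ^ a := by positivity
    have : δ / hplus ≤ δ / (c₁ * δ ^ a) := by
      apply div_le_div_of_nonneg_left hδpos.le hc hlb
    calc δ / hplus ≤ δ / (c₁ * δ ^ a) := this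
      _ = δ ^ b / c₁ := by
          have hδeq : δ ^ b * δ ^ a = δ := by
            rw [← Real.rpow_add hδpos, hab, Real.rpow_one]
          rw [div_eq_div_iff hc.ne' hc₁.ne']; linear_combination (-c₁) * hδeq
  calc |ud hδ y - u y| ≤ C₁ * hplus ^ p + (β + C₂) * δ / hplus := key
    _ ≤ C₁ * (c₂ ^ p * δ ^ b) + (β + C₂) * (δ ^ b / c₁) := by
        have e1 : C₁ * hplus ^ p ≤ C₁ * (c₂ ^ p * δ ^ b) := by
          exact mul_le_mul_of_nonneg_left h1 hC₁
        have e2 : (β + C₂) * δ / hplus ≤ (β + C₂) * (δ ^ b / c₁) := by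
          rw [mul_div_assoc]
          exact mul_le_mul_of_nonneg_left h2 (by linarith)
        linarith
    _ = (C₁ * c₂ ^ p + (β + C₂) / c₁) * δ ^ b := by ring
end
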